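/- The localization of the ring R = 𝔽₂[ρ, r₀, r₁, r₂, …]/(rᵢ² − ρ·rᵢ₊₁ : i ∈ ℕ) at the multiplicative submonoid generated by the two elements ρ̄ and r̄₀ is isomorphic, as a commutative ring, to the Laurent polynomial ring in two variables over 𝔽₂, i.e. to 𝔽₂[ρ, ρ⁻¹, r₀, r₀⁻¹] = (𝔽₂[t, t⁻¹])[u, u⁻¹]. -/

import Mathlib

open MvPolynomial

noncomputable section

/-- The polynomial ring `𝔽₂[ρ, r₀, r₁, …]`: variable `none` is `ρ`, `some i` is `rᵢ`. -/
abbrev P : Type := MvPolynomial (Option ℕ) (ZMod 2)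

/-- The ideal generated by the relations `rᵢ² − ρ·rᵢ₊₁`, `i ∈ ℕ`. -/
def relIdeal : Ideal P :=
  Ideal.span (Set.range fun i : ℕ => (X (some i) : P) ^ 2 - X none * X (some (i + 1)))

/-- `R = 𝔽₂[ρ, r₀, r₁, …]/(rᵢ² − ρ·rᵢ₊₁ : i ∈ ℕ)`. -/
abbrev R : Type := P ⧸ relIdeal

/-- The image `ρ̄` of `ρ` in `R`. -/
def ρbar : R := Ideal.Quotient.mk relIdeal (X none)

/-- The image `r̄ᵢ` of `rᵢ` in `R`. -/
def rbar (i : ℕ) : R := Ideal.Quotient.mk relIdeal (X (some i))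

/-! Once `ρ` is inverted, the relations `rᵢ² = ρ rᵢ₊₁` determine every `rᵢ` from `r₀`:
`rᵢ = ρ ^ (1 - 2 ^ i) r₀ ^ (2 ^ i)`. Hence `R[ρ⁻¹, r₀⁻¹]` is generated by the units `ρ, r₀`,
and the substitution `ρ ↦ t`, `rᵢ ↦ t ^ (1 - 2 ^ i) u ^ (2 ^ i)`, which respects the relations,
inverts the evaluation `t ↦ ρ`, `u ↦ r₀` of `𝔽₂[t, t⁻¹][u, u⁻¹]`. -/

open LaurentPolynomial hiding C

theorem LaurentPolynomial.ringHom_ext {A B : Type*} [CommSemiring A] [Semiring B]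
    {f g : A[T;T⁻¹] →+* B} (hC : f.comp LaurentPolynomial.C = g.comp LaurentPolynomial.C)
    (hT : f (T 1) = g (T 1)) : f = g := by
  refine IsLocalization.ringHom_ext (Submonoid.powers (Polynomial.X : Polynomial A)) ?_
  refine Polynomial.ringHom_ext (fun a => ?_) ?_
  · simpa [algebraMap_eq_toLaurent] using RingHom.congr_fun hC a
  · simpa [algebraMap_eq_toLaurent] using hT

theorem eq_zpow_mul_pow_two_pow_of_sq_eq_mul_succ {M : Type*} [CommMonoid M] (ρ : Mˣ)
    (r : ℕ → M) (h : ∀ i, r i ^ 2 = ρ * r (i + 1)) (i : ℕ) :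
    r i = ↑(ρ ^ (1 - 2 ^ i : ℤ)) * r 0 ^ 2 ^ i := by
  induction i with
  | zero => simp
  | succ i ih =>
    have hsucc : r (i + 1) = ↑ρ⁻¹ * r i ^ 2 := by rw [h, ← mul_assoc, ρ.inv_mul, one_mul]
    rw [hsucc, ih, mul_pow, ← pow_mul, ← pow_succ, ← mul_assoc, ← Units.val_pow_eq_pow_val,
      ← Units.val_mul, ← zpow_neg_one, ← zpow_natCast, ← zpow_mul, ← zpow_add]
    congr 3
    push_cast
    ring

theorem sq_C_T_mul_T {A : Type*} [CommSemiring A] (i : ℕ) :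
    (LaurentPolynomial.C (T (1 - 2 ^ i)) * T (2 ^ i) : A[T;T⁻¹][T;T⁻¹]) ^ 2 =
      LaurentPolynomial.C (T 1) *
        (LaurentPolynomial.C (T (1 - 2 ^ (i + 1))) * T (2 ^ (i + 1))) := by
  rw [mul_pow, ← map_pow, T_pow, T_pow, ← mul_assoc, ← map_mul, ← T_add]
  congr 3 <;> push_cast <;> ring

theorem rbar_sq (i : ℕ) : rbar i ^ 2 = ρbar * rbar (i + 1) := by
  rw [← sub_eq_zero, rbar, rbar, ρbar, ← map_pow, ← map_mul, ← map_sub,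
    Ideal.Quotient.eq_zero_iff_mem]
  exact Ideal.subset_span ⟨i, rfl⟩

/-- In `𝔽₂[t, t⁻¹][u, u⁻¹]` the variable `t` is `C (T 1)` and `u` is `T 1`. -/
def laurentImage : Option ℕ → (ZMod 2)[T;T⁻¹][T;T⁻¹]
  | none => LaurentPolynomial.C (T 1)
  | some i => LaurentPolynomial.C (T (1 - 2 ^ i)) * T (2 ^ i)

theorem relIdeal_le_ker : relIdeal ≤ RingHom.ker (eval₂Hom (algebraMap _ _) laurentImage) := by
  refine Ideal.span_le.2 (Set.range_subset_iff.2 fun i => ?_)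
  simp [laurentImage, sq_C_T_mul_T]

def toLaurent₂ : R →+* (ZMod 2)[T;T⁻¹][T;T⁻¹] :=
  Ideal.Quotient.lift relIdeal _ fun _ ha => relIdeal_le_ker ha

@[simp]
theorem toLaurent₂_ρbar : toLaurent₂ ρbar = LaurentPolynomial.C (T 1) :=
  eval₂_X _ _ none

@[simp]
theorem toLaurent₂_rbar (i : ℕ) :
    toLaurent₂ (rbar i) = LaurentPolynomial.C (T (1 - 2 ^ i)) * T (2 ^ i) :=
  eval₂_X _ _ (some i)

abbrev ρr₀Submonoid : Submonoid R := Submonoid.closure {ρbar, rbar 0}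

theorem isUnit_toLaurent₂ (s : ρr₀Submonoid) : IsUnit (toLaurent₂ s) := by
  have hle : ρr₀Submonoid ≤ (IsUnit.submonoid _).comap toLaurent₂ := by
    rw [Submonoid.closure_le]
    rintro x (rfl | rfl)
    · simpa [IsUnit.mem_submonoid_iff] using (isUnit_T 1).map LaurentPolynomial.C
    · simpa [IsUnit.mem_submonoid_iff] using isUnit_T 1
  exact hle s.2

def locToLaurent : Localization ρr₀Submonoid →+* (ZMod 2)[T;T⁻¹][T;T⁻¹] :=
  IsLocalization.lift (S := Localization ρr₀Submonoid) isUnit_toLaurent₂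

@[simp]
theorem locToLaurent_algebraMap (x : R) : locToLaurent (algebraMap R _ x) = toLaurent₂ x :=
  IsLocalization.lift_eq (S := Localization ρr₀Submonoid) _ x

def ρunit : (Localization ρr₀Submonoid)ˣ :=
  (IsLocalization.map_units (Localization ρr₀Submonoid)
    (⟨ρbar, Submonoid.subset_closure (by simp)⟩ : ρr₀Submonoid)).unit

def r₀unit : (Localization ρr₀Submonoid)ˣ :=
  (IsLocalization.map_units (Localization ρr₀Submonoid)
    (⟨rbar 0, Submonoid.subset_closure (by simp)⟩ : ρr₀Submonoid)).unit

def laurentToLoc : (ZMod 2)[T;T⁻¹][T;T⁻¹] →+* Localization ρr₀Submonoid :=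
  eval₂ (S := Localization ρr₀Submonoid)
    (eval₂ (algebraMap (ZMod 2) (Localization ρr₀Submonoid)) ρunit) r₀unit

theorem algebraMap_rbar (i : ℕ) :
    algebraMap R (Localization ρr₀Submonoid) (rbar i) =
      ↑(ρunit ^ (1 - 2 ^ i : ℤ)) * ↑(r₀unit ^ (2 ^ i : ℤ)) := by
  refine (eq_zpow_mul_pow_two_pow_of_sq_eq_mul_succ ρunit (fun i => algebraMap R _ (rbar i))
    (fun i => ?_) i).trans ?_
  · simp [ρunit, ← map_pow, rbar_sq]
  · have hcast : (2 ^ i : ℤ) = ((2 ^ i : ℕ) : ℤ) := by push_cast; rfl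
    rw [hcast, zpow_natCast, Units.val_pow_eq_pow_val, r₀unit, IsUnit.unit_spec]

theorem laurentToLoc_comp_toLaurent₂ :
    laurentToLoc.comp toLaurent₂ = algebraMap R (Localization ρr₀Submonoid) := by
  refine Ideal.Quotient.ringHom_ext (MvPolynomial.ringHom_ext' (RingHom.ext_zmod _ _) ?_)
  rintro (_ | i)
  · change laurentToLoc (toLaurent₂ ρbar) = algebraMap R _ ρbar
    simp [laurentToLoc, ρunit]
  · change laurentToLoc (toLaurent₂ (rbar i)) = algebraMap R _ (rbar i)
    simp [laurentToLoc, algebraMap_rbar]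

theorem laurentToLoc_comp_locToLaurent : laurentToLoc.comp locToLaurent = RingHom.id _ :=
  IsLocalization.ringHom_ext (S := Localization ρr₀Submonoid) ρr₀Submonoid <|
    RingHom.ext fun x => by simpa using RingHom.congr_fun laurentToLoc_comp_toLaurent₂ x

theorem locToLaurent_comp_laurentToLoc : locToLaurent.comp laurentToLoc = RingHom.id _ := by
  refine LaurentPolynomial.ringHom_ext
    (LaurentPolynomial.ringHom_ext (RingHom.ext_zmod _ _) ?_) ?_
  · simp [laurentToLoc, ρunit]
  · simp [laurentToLoc, r₀unit]

set_option synthInstance.maxHeartbeats 1000000 in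
/-- The localization of `R` at the multiplicative submonoid generated by `ρ̄` and `r̄₀` is
isomorphic, as a commutative ring, to the Laurent polynomial ring in two variables over `𝔽₂`,
i.e. `(𝔽₂[t, t⁻¹])[u, u⁻¹]`. -/
theorem stmt2 :
    Nonempty
      (Localization (Submonoid.closure {ρbar, rbar 0}) ≃+*
        LaurentPolynomial (LaurentPolynomial (ZMod 2))) :=
  ⟨RingEquiv.ofRingHom locToLaurent laurentToLoc locToLaurent_comp_laurentToLoc
    laurentToLoc_comp_locToLaurent⟩
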